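/- Let Ω be nonempty, X and Y uncertain variables with finite ranges. For every function g : 𝕏 → 𝕌 with U = g ∘ X, the leakage satisfies L(U → Y) ≤ log₂(|⟦X⟧| − min_{y ∈ ⟦Y⟧} |⟦X | Y = y⟧| + 1). -/

import Mathlib

open Set

/-- Conditional range ⟦X | Y = y⟧ = {X ω : Y ω = y}. -/
def crange {Ω 𝕏 𝕐 : Type*} (X : Ω → 𝕏) (Y : Ω → 𝕐) (y : 𝕐) : Set 𝕏 :=
  {x | ∃ ω, Y ω = y ∧ X ω = x}

/-- min_{y ∈ ⟦Y⟧} |⟦X | Y = y⟧|. -/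
noncomputable def minCond {Ω 𝕏 𝕐 : Type*} (X : Ω → 𝕏) (Y : Ω → 𝕐) : ℕ :=
  sInf ((fun y => (crange X Y y).ncard) '' Set.range Y)

/-- Non-stochastic brute-force guessing leakage
L(X → Y) = log₂(|⟦X⟧| / min_{y ∈ ⟦Y⟧} |⟦X|Y=y⟧|). -/
noncomputable def leak {Ω 𝕏 𝕐 : Type*} (X : Ω → 𝕏) (Y : Ω → 𝕐) : ℝ :=
  Real.logb 2 (((Set.range X).ncard : ℝ) / (minCond X Y : ℝ))

/-- Maximal non-stochastic brute-force leakage (closed formula)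
L⋆(X → Y) = log₂(|⟦X⟧| − min_{y∈⟦Y⟧}|⟦X|Y=y⟧| + 1). -/
noncomputable def maxLeak {Ω 𝕏 𝕐 : Type*} (X : Ω → 𝕏) (Y : Ω → 𝕐) : ℝ :=
  Real.logb 2 (((Set.range X).ncard : ℝ) - (minCond X Y : ℝ) + 1)


/- Write `n = |⟦X⟧|`, `m = minCond X Y` and `c = minCond (g ∘ X) Y = |⟦U|Y=y₀⟧|` for a minimising
`y₀`. Splitting `⟦X⟧` into `⟦X|Y=y₀⟧` and its complement, `g` maps the first part onto `⟦U|Y=y₀⟧` and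
the second onto at most `n - |⟦X|Y=y₀⟧| ≤ n - m` points, so `|⟦U⟧| ≤ c + (n - m) ≤ c (n - m + 1)`
because `c ≥ 1`. -/

lemma Set.ncard_image_le_ncard_image_add_ncard_sdiff {α β : Type*} (f : α → β) {s t : Set α}
    (hst : s ⊆ t) (ht : t.Finite) : (f '' t).ncard ≤ (f '' s).ncard + (t \ s).ncard := by
  calc (f '' t).ncard = (f '' s ∪ f '' (t \ s)).ncard := by
        rw [← Set.image_union, Set.union_sdiff_cancel hst]
    _ ≤ (f '' s).ncard + (f '' (t \ s)).ncard := Set.ncard_union_le _ _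
    _ ≤ (f '' s).ncard + (t \ s).ncard := by gcongr; exact Set.ncard_image_le ht.sdiff

section crange

variable {Ω 𝕏 𝕐 : Type*} (X : Ω → 𝕏) (Y : Ω → 𝕐)

lemma crange_comp {𝕌 : Type*} (g : 𝕏 → 𝕌) (y : 𝕐) :
    crange (g ∘ X) Y y = g '' crange X Y y := by
  ext u
  constructor
  · rintro ⟨ω, hω, rfl⟩
    exact ⟨X ω, ⟨ω, hω, rfl⟩, rfl⟩
  · rintro ⟨x, ⟨ω, hω, rfl⟩, rfl⟩
    exact ⟨ω, hω, rfl⟩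

lemma crange_subset_range (y : 𝕐) : crange X Y y ⊆ Set.range X := by
  rintro x ⟨ω, -, rfl⟩
  exact ⟨ω, rfl⟩

lemma mem_crange_apply (ω : Ω) : X ω ∈ crange X Y (Y ω) := ⟨ω, rfl, rfl⟩

lemma minCond_le_ncard_crange (ω : Ω) : minCond X Y ≤ (crange X Y (Y ω)).ncard :=
  Nat.sInf_le ⟨Y ω, ⟨ω, rfl⟩, rfl⟩

lemma exists_minCond_eq [Nonempty Ω] : ∃ ω, (crange X Y (Y ω)).ncard = minCond X Y := by
  obtain ⟨_, ⟨ω, rfl⟩, h⟩ :=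
    Nat.sInf_mem ((Set.range_nonempty Y).image fun y => (crange X Y y).ncard)
  exact ⟨ω, h⟩

lemma minCond_le_ncard_range (hX : (Set.range X).Finite) (ω : Ω) :
    minCond X Y ≤ (Set.range X).ncard :=
  (minCond_le_ncard_crange X Y ω).trans (Set.ncard_le_ncard (crange_subset_range X Y _) hX)

lemma ncard_range_comp_le {𝕌 : Type*} (g : 𝕏 → 𝕌) (hX : (Set.range X).Finite) (y : 𝕐) :
    (Set.range (g ∘ X)).ncard ≤
      (crange (g ∘ X) Y y).ncard + ((Set.range X).ncard - (crange X Y y).ncard) := by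
  have hsub := crange_subset_range X Y y
  rw [Set.range_comp, crange_comp, ← Set.ncard_sdiff hsub (hX.subset hsub)]
  exact Set.ncard_image_le_ncard_image_add_ncard_sdiff g hsub hX

end crange

theorem stmt_6_general {Ω 𝕏 𝕐 𝕌 : Type*} [Nonempty Ω] (X : Ω → 𝕏) (Y : Ω → 𝕐) (g : 𝕏 → 𝕌)
    (hX : (Set.range X).Finite) :
    leak (g ∘ X) Y ≤
      Real.logb 2 (((Set.range X).ncard : ℝ) - (minCond X Y : ℝ) + 1) := by
  obtain ⟨ω₀, hω₀⟩ := exists_minCond_eq (g ∘ X) Y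
  have hUfin : (Set.range (g ∘ X)).Finite := Set.range_comp g X ▸ hX.image g
  have hc : 0 < minCond (g ∘ X) Y := hω₀ ▸
    (Set.ncard_pos (hUfin.subset (crange_subset_range _ Y _))).2 ⟨_, mem_crange_apply _ Y ω₀⟩
  have hmn := minCond_le_ncard_range X Y hX ω₀
  have hsum : (Set.range (g ∘ X)).ncard ≤
      minCond (g ∘ X) Y + ((Set.range X).ncard - minCond X Y) :=
    calc (Set.range (g ∘ X)).ncard
        ≤ (crange (g ∘ X) Y (Y ω₀)).ncard + ((Set.range X).ncard - (crange X Y (Y ω₀)).ncard) :=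
          ncard_range_comp_le X Y g hX (Y ω₀)
      _ ≤ minCond (g ∘ X) Y + ((Set.range X).ncard - minCond X Y) := by
          rw [hω₀]; gcongr; exact minCond_le_ncard_crange X Y ω₀
  have hcount : (Set.range (g ∘ X)).ncard ≤
      minCond (g ∘ X) Y * ((Set.range X).ncard - minCond X Y + 1) := by
    rw [mul_add_one, add_comm]
    exact hsum.trans (by gcongr; exact Nat.le_mul_of_pos_left _ hc)
  have hUpos : 0 < (Set.range (g ∘ X)).ncard := (Set.ncard_pos hUfin).2 (Set.range_nonempty _)
  unfold leak
  apply Real.logb_le_logb_of_le one_lt_two (by positivity)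
  rw [div_le_iff₀ (by exact_mod_cast hc), mul_comm]
  have := (Nat.cast_le (α := ℝ)).2 hcount
  push_cast [Nat.cast_sub hmn] at this
  exact this

theorem stmt_6 {Ω 𝕏 𝕐 𝕌 : Type*} [Nonempty Ω] (X : Ω → 𝕏) (Y : Ω → 𝕐) (g : 𝕏 → 𝕌)
    (hX : (Set.range X).Finite) (hY : (Set.range Y).Finite) :
    leak (g ∘ X) Y ≤
      Real.logb 2 (((Set.range X).ncard : ℝ) - (minCond X Y : ℝ) + 1) :=
  stmt_6_general X Y g hX
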